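/- arXiv:1308.5618 — 2 statements merged into one kernel-verified Lean document; each statement's English description precedes it below -/
import Mathlib

section
/- Let F be a tree set and w ∈ F. If U is a finite Fw⁻¹-maximal suffix code and V is a finite w⁻¹F-maximal prefix code, then the generalized extension graph G_{U,V}(w) is a tree (connected and acyclic). -/
open List

variable {A : Type*}

/-- The `n`-th power `wⁿ` of a word (concatenation). -/
def wordPow (w : List A) (n : ℕ) : List A := (List.replicate n w).flatten

/-- A set of words is factorial if it contains the factors of its elements. -/
def Factorial (F : Set (List A)) : Prop := ∀ ⦃u v : List A⦄, u ∈ F → v <:+: u → v ∈ F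

/-- A set of words is recurrent if it is factorial and any two of its words
occur in a common word of the set, in a prescribed order. -/
def Recurrent (F : Set (List A)) : Prop :=
  Factorial F ∧ ∀ u ∈ F, ∀ w ∈ F, ∃ v : List A, u ++ v ++ w ∈ F

/-- A set of words is uniformly recurrent if it is factorial, right-essential, and
every word of the set occurs in all long enough words of the set. -/
def UniformlyRecurrent (F : Set (List A)) : Prop :=
  Factorial F ∧ (∀ w ∈ F, ∃ a : A, w ++ [a] ∈ F) ∧
    ∀ u ∈ F, ∃ n ≥ 1, ∀ w ∈ F, w.length = n → u <:+: w

/-- A set of words is periodic if it is the set of factors of the powers of a single word. -/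
def Periodic (F : Set (List A)) : Prop :=
  ∃ w : List A, F = {v | ∃ n : ℕ, v <:+: wordPow w n}

/-- `L(w)`, the set of left extensions of `w` in `F`. -/
def LeftExt (F : Set (List A)) (w : List A) : Set A := {a | a :: w ∈ F}

/-- `R(w)`, the set of right extensions of `w` in `F`. -/
def RightExt (F : Set (List A)) (w : List A) : Set A := {a | w ++ [a] ∈ F}

/-- A word is left-special if it has at least two left extensions. -/
def LeftSpecial (F : Set (List A)) (w : List A) : Prop := 2 ≤ (LeftExt F w).ncard

/-- A word is right-special if it has at least two right extensions. -/
def RightSpecial (F : Set (List A)) (w : List A) : Prop := 2 ≤ (RightExt F w).ncard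

/-- A word is bispecial if it is both left-special and right-special. -/
def Bispecial (F : Set (List A)) (w : List A) : Prop := LeftSpecial F w ∧ RightSpecial F w

/-- A set of words is biessential if it is factorial and every one of its words is
biextendable. -/
def Biessential (F : Set (List A)) : Prop :=
  Factorial F ∧ ∀ w ∈ F, ∃ a b : A, a :: (w ++ [b]) ∈ F

/-- The bipartite (simple, undirected) graph on `α ⊕ β` induced by a relation
`E : α → β → Prop`. -/
def bipGraph {α β : Type*} (E : α → β → Prop) : SimpleGraph (α ⊕ β) where
  Adj x y := ∃ a b, E a b ∧ ((x = Sum.inl a ∧ y = Sum.inr b) ∨ (x = Sum.inr b ∧ y = Sum.inl a))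
  symm := by
    constructor
    rintro x y ⟨a, b, h, hc⟩
    exact ⟨a, b, h, by tauto⟩
  loopless := by
    constructor
    rintro x ⟨a, b, h, hc⟩
    rcases hc with ⟨h1, h2⟩ | ⟨h1, h2⟩ <;> simp_all

/-- The extension graph `G(w)` of a word `w`: the bipartite graph on
`L(w) ⊔ R(w)` with an edge between `a` and `b` iff `awb ∈ F`. -/
def extensionGraph (F : Set (List A)) (w : List A) :
    SimpleGraph ({a : A // a ∈ LeftExt F w} ⊕ {b : A // b ∈ RightExt F w}) :=
  bipGraph (fun a b => a.1 :: (w ++ [b.1]) ∈ F)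

/-- A tree set: a biessential set all of whose extension graphs are trees. -/
def IsTreeSet (F : Set (List A)) : Prop :=
  Biessential F ∧ ∀ w ∈ F, (extensionGraph F w).IsTree

/-- The generalized extension graph `G_{U,V}(w)`: the bipartite graph on
`U(w) ⊔ V(w)` with an edge between `ℓ` and `r` iff `ℓwr ∈ F`. -/
def genExtGraph (F : Set (List A)) (U V : Set (List A)) (w : List A) :
    SimpleGraph ({l : List A // l ∈ U ∧ l ++ w ∈ F} ⊕ {r : List A // r ∈ V ∧ w ++ r ∈ F}) :=
  bipGraph (fun l r => l.1 ++ w ++ r.1 ∈ F)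

/-- A prefix code: a set of nonempty words none of which is a proper prefix of another. -/
def IsPrefixCode (U : Set (List A)) : Prop :=
  (∀ u ∈ U, u ≠ []) ∧ ∀ u ∈ U, ∀ v ∈ U, u <+: v → u = v

/-- A suffix code: a set of nonempty words none of which is a proper suffix of another. -/
def IsSuffixCode (U : Set (List A)) : Prop :=
  (∀ u ∈ U, u ≠ []) ∧ ∀ u ∈ U, ∀ v ∈ U, u <:+ v → u = v

/-- An `S`-maximal prefix code: a prefix code contained in `S` and not properly contained
in any prefix code contained in `S`. -/
def IsMaximalPrefixCodeIn (S U : Set (List A)) : Prop :=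
  IsPrefixCode U ∧ U ⊆ S ∧ ∀ W, IsPrefixCode W → W ⊆ S → U ⊆ W → U = W

/-- An `S`-maximal suffix code. -/
def IsMaximalSuffixCodeIn (S U : Set (List A)) : Prop :=
  IsSuffixCode U ∧ U ⊆ S ∧ ∀ W, IsSuffixCode W → W ⊆ S → U ⊆ W → U = W

/-- `Γ_F(x)`, the set of right return words to `x` in `F`. -/
def ReturnWords (F : Set (List A)) (x : List A) : Set (List A) :=
  {r | r ≠ [] ∧ x ++ r ∈ F ∧ ∃ s : List A, s ≠ [] ∧ x ++ r = s ++ x}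

/-- `R_F(x) = Γ_F(x) \ Γ_F(x)A⁺`, the set of first right return words to `x` in `F`. -/
def FirstReturnWords (F : Set (List A)) (x : List A) : Set (List A) :=
  ReturnWords F x \ {r | ∃ r' ∈ ReturnWords F x, ∃ s : List A, s ≠ [] ∧ r = r' ++ s}

/-- The natural map from words to the free group. -/
def wordToFree (w : List A) : FreeGroup A := (w.map FreeGroup.of).prod

/-- `x` is unioccurrent in `y` if `x` occurs exactly once in `y`. -/
def Unioccurrent (x y : List A) : Prop := ∃! p : List A × List A, y = p.1 ++ x ++ p.2

/-- Vertices of the Rauzy graph `G_n`: words of `F` of length `n`. -/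
def RauzyVertex (F : Set (List A)) (n : ℕ) := {w : List A // w ∈ F ∧ w.length = n}

/-- Edges of the Rauzy graph `G_n`: an edge from `x` to `y` labeled `a` whenever
`xa ∈ F ∩ Ay`. -/
def RauzyEdge (F : Set (List A)) (n : ℕ) (x : RauzyVertex F n) (a : A)
    (y : RauzyVertex F n) : Prop :=
  x.1 ++ [a] ∈ F ∧ ∃ b : A, x.1 ++ [a] = b :: y.1

/-- `GenPathLabel E p q g` holds when there is a generalized path (a path which may
traverse edges forwards or backwards) from `p` to `q` in the `A`-labeled graph with
edge relation `E`, whose label (product of contributions in the free group) is `g`. -/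
inductive GenPathLabel {V : Type*} (E : V → A → V → Prop) : V → V → FreeGroup A → Prop
  | nil (v : V) : GenPathLabel E v v 1
  | fwd {p q r : V} {g : FreeGroup A} {a : A} :
      GenPathLabel E p q g → E q a r → GenPathLabel E p r (g * FreeGroup.of a)
  | bwd {p q r : V} {g : FreeGroup A} {a : A} :
      GenPathLabel E p q g → E r a q → GenPathLabel E p r (g * (FreeGroup.of a)⁻¹)

/-- A vertex of a Rauzy graph is special if the corresponding word is left-special
or right-special. -/
def SpecialWord (F : Set (List A)) (w : List A) : Prop := LeftSpecial F w ∨ RightSpecial F w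

/-- Nonempty directed paths in the Rauzy graph `G_n` all of whose intermediate
vertices are non-special, together with their labels. -/
inductive NSPath (F : Set (List A)) (n : ℕ) : RauzyVertex F n → RauzyVertex F n → List A → Prop
  | single {p q : RauzyVertex F n} {a : A} : RauzyEdge F n p a q → NSPath F n p q [a]
  | cons {p q r : RauzyVertex F n} {a : A} {l : List A} :
      RauzyEdge F n p a q → ¬ SpecialWord F q.1 → NSPath F n q r l → NSPath F n p r (a :: l)

/-- The Rauzy graph `G_n` is of the first infinite type with respect to the special
vertices `x, y` and the words `u, v, w, t`: `x` and `y` are the only special vertices and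
the simple directed paths between them with non-special intermediate vertices are exactly
`x → x` labeled `u`, `x → y` labeled `v`, `y → y` labeled `w` and `y → x` labeled `t`. -/
def FirstInfiniteType (F : Set (List A)) (n : ℕ) (x y : RauzyVertex F n)
    (u v w t : List A) : Prop :=
  x ≠ y ∧ SpecialWord F x.1 ∧ SpecialWord F y.1 ∧
    (∀ z : RauzyVertex F n, SpecialWord F z.1 → z = x ∨ z = y) ∧
    (∀ p q : RauzyVertex F n, (p = x ∨ p = y) → (q = x ∨ q = y) → ∀ l : List A,
      (NSPath F n p q l ↔ ((p = x ∧ q = x ∧ l = u) ∨ (p = x ∧ q = y ∧ l = v) ∨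
        (p = y ∧ q = y ∧ l = w) ∨ (p = y ∧ q = x ∧ l = t))))
/-!
Induction on `∑_{u ∈ U} (|u| - 1) + ∑_{v ∈ V} (|v| - 1)`. When all words have length one, `U` and
`V` are the one-letter extensions of `w` and `G_{U,V}(w)` is the extension graph `G(w)`. Otherwise,
reversing all words if necessary, `U` has a longest word `am` with `m` nonempty. Then every
`cm ∈ Fw⁻¹` lies in `U`, and `U' = (U \ Am) ∪ {m}` is again an `Fw⁻¹`-maximal suffix code. The
graph `G_{U,V}(w)` arises from `G_{U',V}(w)` by replacing the vertex `m`, whose neighbours form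
`V(mw) = {v ∈ V | mwv ∈ F}`, with the graph `G_{A,V(mw)}(mw)` glued along `c ↦ cm`. Both are trees
by induction, so the result is connected and has one edge fewer than vertices: it is a tree.
-/

open Set SimpleGraph

section Bipartite

variable {α β α' β' : Type*} {E : α → β → Prop} {E' : α' → β' → Prop}

lemma bipGraph_adj_inl_inr {a : α} {b : β} :
    (bipGraph E).Adj (.inl a) (.inr b) ↔ E a b := by
  constructor
  · rintro ⟨a', b', h, ⟨h₁, h₂⟩ | ⟨h₁, h₂⟩⟩ <;> simp_all
  · exact fun h => ⟨a, b, h, .inl ⟨rfl, rfl⟩⟩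

lemma bipGraph_adj_iff {x y : α ⊕ β} :
    (bipGraph E).Adj x y ↔
      ∃ a b, E a b ∧ (x = .inl a ∧ y = .inr b ∨ x = .inr b ∧ y = .inl a) :=
  Iff.rfl

lemma bipGraph_reachable_sumMap (fa : α' → α) (fb : β' → β)
    (h : ∀ a b, E' a b → (bipGraph E).Reachable (.inl (fa a)) (.inr (fb b))) {x y : α' ⊕ β'}
    (hxy : (bipGraph E').Reachable x y) :
    (bipGraph E).Reachable (Sum.map fa fb x) (Sum.map fa fb y) := by
  obtain ⟨p⟩ := hxy
  induction p with
  | nil => rfl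
  | cons hadj _ ih =>
    obtain ⟨a, b, hab, ⟨rfl, rfl⟩ | ⟨rfl, rfl⟩⟩ := hadj
    exacts [(h a b hab).trans ih, (h a b hab).symm.trans ih]

lemma card_edgeSet_bipGraph :
    Nat.card (bipGraph E).edgeSet = Nat.card {p : α × β // E p.1 p.2} := by
  refine (Nat.card_eq_of_bijective
    (fun p => ⟨s(.inl p.1.1, .inr p.1.2), bipGraph_adj_inl_inr.2 p.2⟩) ⟨?_, ?_⟩).symm
  · rintro ⟨⟨a, b⟩, h⟩ ⟨⟨a', b'⟩, h'⟩ he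
    simp only [Subtype.ext_iff, Sym2.eq_iff] at he
    rcases he with ⟨h₁, h₂⟩ | ⟨h₁, h₂⟩ <;> simp_all
  · rintro ⟨e, he⟩
    induction e using Sym2.ind with
    | _ x y =>
      rw [mem_edgeSet] at he
      obtain ⟨a, b, hab, ⟨rfl, rfl⟩ | ⟨rfl, rfl⟩⟩ := he
      exacts [⟨⟨(a, b), hab⟩, rfl⟩, ⟨⟨(a, b), hab⟩, Subtype.ext Sym2.eq_swap⟩]

def bipGraphIso (ea : α ≃ α') (eb : β ≃ β') (h : ∀ a b, E a b ↔ E' (ea a) (eb b)) :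
    bipGraph E ≃g bipGraph E' where
  toEquiv := Equiv.sumCongr ea eb
  map_rel_iff' := by
    rintro (a | b) (a' | b') <;> simp [bipGraph_adj_iff, h]

def bipGraphIsoSwap (ea : α ≃ β') (eb : β ≃ α') (h : ∀ a b, E a b ↔ E' (eb b) (ea a)) :
    bipGraph E ≃g bipGraph E' where
  toEquiv := (Equiv.sumCongr ea eb).trans (Equiv.sumComm β' α')
  map_rel_iff' := by
    rintro (a | b) (a' | b') <;> simp [bipGraph_adj_iff, h]

end Bipartite

section Codes

variable {S U V : Set (List A)}

theorem forall_code_eq_iff_forall_comparable {α : Type*} {r : α → α → Prop} (hr : ∀ x, r x x)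
    {P : α → Prop} {S U : Set α} (hUP : ∀ u ∈ U, P u) (hU : ∀ u ∈ U, ∀ v ∈ U, r u v → u = v)
    (hUS : U ⊆ S) :
    (∀ W : Set α, ((∀ u ∈ W, P u) ∧ ∀ u ∈ W, ∀ v ∈ W, r u v → u = v) → W ⊆ S → U ⊆ W →
      U = W) ↔ ∀ x ∈ S, P x → ∃ u ∈ U, r u x ∨ r x u := by
  constructor
  · intro hmax x hxS hx
    by_contra! hno
    have hcode : (∀ u ∈ insert x U, P u) ∧ ∀ u ∈ insert x U, ∀ v ∈ insert x U, r u v → u = v := by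
      refine ⟨forall_mem_insert.2 ⟨hx, hUP⟩, ?_⟩
      rintro u (rfl | hu) v (rfl | hv) huv
      exacts [rfl, ((hno v hv).2 huv).elim, ((hno u hu).1 huv).elim, hU u hu v hv huv]
    have := hmax _ hcode (insert_subset hxS hUS) (subset_insert x U)
    exact (hno x (this ▸ mem_insert x U)).1 (hr x)
  · rintro h W ⟨hWP, hW⟩ hWS hUW
    refine hUW.antisymm fun x hx => ?_
    obtain ⟨u, hu, hux | hxu⟩ := h x (hWS hx) (hWP x hx)
    · exact hW u (hUW hu) x hx hux ▸ hu
    · exact (hW x hx u (hUW hu) hxu).symm ▸ hu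

theorem isMaximalPrefixCodeIn_iff :
    IsMaximalPrefixCodeIn S U ↔
      IsPrefixCode U ∧ U ⊆ S ∧ ∀ x ∈ S, x ≠ [] → ∃ u ∈ U, u <+: x ∨ x <+: u :=
  and_congr_right fun hU => and_congr_right fun hUS =>
    forall_code_eq_iff_forall_comparable List.prefix_refl hU.1 hU.2 hUS

theorem isMaximalSuffixCodeIn_iff :
    IsMaximalSuffixCodeIn S U ↔
      IsSuffixCode U ∧ U ⊆ S ∧ ∀ x ∈ S, x ≠ [] → ∃ u ∈ U, u <:+ x ∨ x <:+ u :=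
  and_congr_right fun hU => and_congr_right fun hUS =>
    forall_code_eq_iff_forall_comparable List.suffix_refl hU.1 hU.2 hUS

theorem IsMaximalPrefixCodeIn.exists_comparable (hU : IsMaximalPrefixCodeIn S U) {x : List A}
    (hx : x ∈ S) (hx₀ : x ≠ []) : ∃ u ∈ U, u <+: x ∨ x <+: u :=
  (isMaximalPrefixCodeIn_iff.1 hU).2.2 x hx hx₀

theorem IsMaximalSuffixCodeIn.exists_comparable (hU : IsMaximalSuffixCodeIn S U) {x : List A}
    (hx : x ∈ S) (hx₀ : x ≠ []) : ∃ u ∈ U, u <:+ x ∨ x <:+ u :=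
  (isMaximalSuffixCodeIn_iff.1 hU).2.2 x hx hx₀

lemma isPrefixCode_setOf_length_eq_one (S : Set (List A)) :
    IsPrefixCode {l ∈ S | l.length = 1} :=
  ⟨fun _ hu => List.ne_nil_of_length_eq_add_one hu.2,
    fun _ hu _ hv h => h.eq_of_length (hu.2.trans hv.2.symm)⟩

lemma isSuffixCode_setOf_length_eq_one (S : Set (List A)) :
    IsSuffixCode {l ∈ S | l.length = 1} :=
  ⟨fun _ hu => List.ne_nil_of_length_eq_add_one hu.2,
    fun _ hu _ hv h => h.eq_of_length (hu.2.trans hv.2.symm)⟩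

lemma isMaximalSuffixCodeIn_setOf_length_eq_one (hS : ∀ s t, s ++ t ∈ S → t ∈ S) :
    IsMaximalSuffixCodeIn S {l ∈ S | l.length = 1} := by
  refine isMaximalSuffixCodeIn_iff.2
    ⟨isSuffixCode_setOf_length_eq_one S, fun _ h => h.1, fun x hx hx₀ => ?_⟩
  obtain ⟨s, c, rfl⟩ := (List.eq_nil_or_concat' x).resolve_left hx₀
  exact ⟨[c], ⟨hS s [c] hx, rfl⟩, .inl (List.suffix_append s [c])⟩

lemma IsMaximalPrefixCodeIn.eq_setOf_length_eq_one (hU : IsMaximalPrefixCodeIn S U)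
    (h : ∀ u ∈ U, u.length = 1) : U = {l ∈ S | l.length = 1} :=
  hU.2.2 _ (isPrefixCode_setOf_length_eq_one S) (fun _ h => h.1) fun u hu => ⟨hU.2.1 hu, h u hu⟩

lemma IsMaximalSuffixCodeIn.eq_setOf_length_eq_one (hU : IsMaximalSuffixCodeIn S U)
    (h : ∀ u ∈ U, u.length = 1) : U = {l ∈ S | l.length = 1} :=
  hU.2.2 _ (isSuffixCode_setOf_length_eq_one S) (fun _ h => h.1) fun u hu => ⟨hU.2.1 hu, h u hu⟩

lemma IsMaximalPrefixCodeIn.preimage_reverse (hV : IsMaximalPrefixCodeIn S V) :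
    IsMaximalSuffixCodeIn (List.reverse ⁻¹' S) (List.reverse ⁻¹' V) := by
  refine isMaximalSuffixCodeIn_iff.2 ⟨⟨fun u hu => ?_, fun u hu v hv h => ?_⟩,
    fun u hu => hV.2.1 hu, fun x hx hx₀ => ?_⟩
  · exact List.reverse_ne_nil_iff.1 (hV.1.1 _ hu)
  · exact List.reverse_injective (hV.1.2 _ hu _ hv (List.reverse_prefix.2 h))
  · obtain ⟨v, hv, h⟩ := hV.exists_comparable hx (List.reverse_ne_nil_iff.2 hx₀)
    refine ⟨v.reverse, by simpa using hv, ?_⟩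
    simpa [← List.reverse_prefix (l₁ := v.reverse), ← List.reverse_prefix (l₂ := v.reverse)] using h

lemma IsMaximalSuffixCodeIn.preimage_reverse (hU : IsMaximalSuffixCodeIn S U) :
    IsMaximalPrefixCodeIn (List.reverse ⁻¹' S) (List.reverse ⁻¹' U) := by
  refine isMaximalPrefixCodeIn_iff.2 ⟨⟨fun u hu => ?_, fun u hu v hv h => ?_⟩,
    fun u hu => hU.2.1 hu, fun x hx hx₀ => ?_⟩
  · exact List.reverse_ne_nil_iff.1 (hU.1.1 _ hu)
  · exact List.reverse_injective (hU.1.2 _ hu _ hv (List.reverse_suffix.2 h))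
  · obtain ⟨v, hv, h⟩ := hU.exists_comparable hx (List.reverse_ne_nil_iff.2 hx₀)
    refine ⟨v.reverse, by simpa using hv, ?_⟩
    simpa [← List.reverse_suffix (l₁ := v.reverse), ← List.reverse_suffix (l₂ := v.reverse)] using h

end Codes

section Residual

variable {F U V : Set (List A)} {w m : List A} {a : A}

lemma Biessential.exists_length_eq_append_mem (hF : Biessential F) {x : List A} (hx : x ∈ F)
    (n : ℕ) : ∃ z : List A, z.length = n ∧ x ++ z ∈ F := by
  induction n with
  | zero => exact ⟨[], rfl, by simpa using hx⟩
  | succ n ih =>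
    obtain ⟨z, hz, hxz⟩ := ih
    obtain ⟨c, b, hcb⟩ := hF.2 _ hxz
    exact ⟨z ++ [b], by simp [hz], hF.1 hcb ⟨[c], [], by simp⟩⟩

lemma IsMaximalPrefixCodeIn.restrict (hF : Biessential F) (hVfin : V.Finite)
    (hV : IsMaximalPrefixCodeIn {p | w ++ p ∈ F} V) (t : List A) :
    IsMaximalPrefixCodeIn {p | t ++ w ++ p ∈ F} {v ∈ V | t ++ w ++ v ∈ F} := by
  refine isMaximalPrefixCodeIn_iff.2 ⟨⟨fun u hu => hV.1.1 u hu.1,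
    fun u hu v hv => hV.1.2 u hu.1 v hv.1⟩, fun _ h => h.2, fun x hx hx₀ => ?_⟩
  obtain ⟨N, hN⟩ := (hVfin.image List.length).bddAbove
  -- extend `x` beyond the lengths of the words of `V`, so that one of them is a prefix of it
  obtain ⟨z, hz, hxz⟩ := hF.exists_length_eq_append_mem (x := t ++ w ++ x) hx (N + 1)
  have hwxz : w ++ (x ++ z) ∈ F := hF.1 hxz ⟨t, [], by simp⟩
  obtain ⟨v, hv, hvxz | hxzv⟩ :=
    hV.exists_comparable (x := x ++ z) hwxz (by simp [hx₀])
  · refine ⟨v, ⟨hv, hF.1 hxz ?_⟩, List.prefix_or_prefix_of_prefix hvxz (List.prefix_append x z)⟩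
    obtain ⟨s, hs⟩ := hvxz
    exact ⟨[], s, by simp [← hs]⟩
  · have := hxzv.length_le
    have := hN (mem_image_of_mem List.length hv)
    simp only [List.length_append] at *
    omega

lemma IsSuffixCode.tail_not_mem (hU : IsSuffixCode U) (ha : a :: m ∈ U) : m ∉ U :=
  fun hm => List.cons_ne_self a m (hU.2 m hm _ ha (List.suffix_cons a m)).symm

lemma cons_mem_of_forall_length_le (hU : IsMaximalSuffixCodeIn {s | s ++ w ∈ F} U)
    (ha : a :: m ∈ U) (hlen : ∀ u ∈ U, u.length ≤ m.length + 1) {c : A}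
    (hc : c :: m ++ w ∈ F) : c :: m ∈ U := by
  obtain ⟨u, hu, hsuf | hsuf⟩ := hU.exists_comparable (x := c :: m) hc (List.cons_ne_nil c m)
  · rcases List.suffix_cons_iff.1 hsuf with rfl | hum
    · exact hu
    · obtain rfl := hU.1.2 u hu _ ha (hum.trans (List.suffix_cons a m))
      simpa using hum.length_le
  · rwa [← hsuf.eq_of_length (le_antisymm hsuf.length_le (by simpa using hlen u hu))] at hu

lemma isMaximalSuffixCodeIn_collapse (hF : Factorial F)
    (hU : IsMaximalSuffixCodeIn {s | s ++ w ∈ F} U) (ha : a :: m ∈ U)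
    (hB : ∀ c : A, c :: m ++ w ∈ F → c :: m ∈ U) (hm : m ≠ []) :
    IsMaximalSuffixCodeIn {s | s ++ w ∈ F} (U \ range (· :: m) ∪ {m}) := by
  refine isMaximalSuffixCodeIn_iff.2 ⟨⟨?_, ?_⟩, ?_, fun x hx hx₀ => ?_⟩
  · rintro u (⟨hu, -⟩ | rfl)
    exacts [hU.1.1 u hu, hm]
  · rintro u (⟨hu, huB⟩ | hu) v (⟨hv, hvB⟩ | hv) huv
    · exact hU.1.2 u hu v hv huv
    · subst v
      exact (huB ⟨a, (hU.1.2 u hu _ ha (huv.trans (List.suffix_cons a m))).symm⟩).elim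
    · -- the letter `c` of `v` preceding the suffix `m` gives `c :: m ∈ U`, a suffix of `v`
      subst u
      obtain ⟨t, rfl⟩ := huv
      obtain ⟨s, c, rfl⟩ := (List.eq_nil_or_concat' t).resolve_left
        (by rintro rfl; exact hU.1.tail_not_mem ha hv)
      have hcm : c :: m ∈ U := hB c (hF (hU.2.1 hv) ⟨s, [], by simp⟩)
      exact (hvB ⟨c, hU.1.2 _ hcm _ hv ⟨s, by simp⟩⟩).elim
    · exact hu.trans hv.symm
  · rintro u (⟨hu, -⟩ | rfl)
    exacts [hU.2.1 hu, hF (hU.2.1 ha) ⟨[a], [], by simp⟩]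
  · obtain ⟨u, hu, hux⟩ := hU.exists_comparable hx hx₀
    by_cases huB : u ∈ range (· :: m)
    · obtain ⟨c, rfl⟩ := huB
      refine ⟨m, .inr rfl, ?_⟩
      rcases hux with h | h
      · exact .inl ((List.suffix_cons c m).trans h)
      · rcases List.suffix_cons_iff.1 h with rfl | h
        exacts [.inl (List.suffix_cons c m), .inr h]
    · exact ⟨u, .inl ⟨hu, huB⟩, hux⟩

end Residual

section GenExtGraph

variable {F U V : Set (List A)} {w m : List A} {a : A}

def genExtPairs (F U V : Set (List A)) (w : List A) : Set (List A × List A) :=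
  {p | p.1 ∈ U ∧ p.2 ∈ V ∧ p.1 ++ w ++ p.2 ∈ F}

lemma card_edgeSet_genExtGraph (hF : Factorial F) :
    Nat.card (genExtGraph F U V w).edgeSet = (genExtPairs F U V w).ncard := by
  rw [genExtGraph, card_edgeSet_bipGraph, ← Nat.card_coe_set_eq]
  refine Nat.card_eq_of_bijective
    (fun q => ⟨(q.1.1.1, q.1.2.1), q.1.1.2.1, q.1.2.2.1, q.2⟩) ⟨?_, ?_⟩
  · rintro ⟨⟨⟨l, hl⟩, ⟨r, hr⟩⟩, he⟩ ⟨⟨⟨l', hl'⟩, ⟨r', hr'⟩⟩, he'⟩ h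
    obtain ⟨rfl, rfl⟩ := Prod.mk.inj (Subtype.mk.inj h)
    rfl
  · rintro ⟨⟨l, r⟩, hl, hr, he⟩
    exact ⟨⟨⟨⟨l, hl, hF he ⟨[], r, rfl⟩⟩, ⟨r, hr, hF he ⟨l, [], by simp⟩⟩⟩, he⟩, rfl⟩

lemma genExtGraph_isTree_iff (hF : Factorial F) (hUfin : U.Finite) (hVfin : V.Finite)
    (hU : U ⊆ {s | s ++ w ∈ F}) (hV : V ⊆ {p | w ++ p ∈ F}) :
    (genExtGraph F U V w).IsTree ↔
      (genExtGraph F U V w).Connected ∧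
        (genExtPairs F U V w).ncard + 1 = U.ncard + V.ncard := by
  have := hUfin.to_subtype
  have := hVfin.to_subtype
  let e : ({l // l ∈ U ∧ l ++ w ∈ F} ⊕ {r // r ∈ V ∧ w ++ r ∈ F}) ≃ U ⊕ V :=
    .sumCongr (.subtypeEquivRight fun l => and_iff_left_of_imp (@hU l))
      (.subtypeEquivRight fun r => and_iff_left_of_imp (@hV r))
  have := Finite.of_equiv _ e.symm
  rw [isTree_iff_connected_and_card, card_edgeSet_genExtGraph hF, Nat.card_congr e,
    Nat.card_sum, Nat.card_coe_set_eq, Nat.card_coe_set_eq]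

lemma ncard_genExtPairs_union {S T : Set (List A)} (hST : Disjoint S T) (hS : S.Finite)
    (hT : T.Finite) (hV : V.Finite) :
    (genExtPairs F (S ∪ T) V w).ncard =
      (genExtPairs F S V w).ncard + (genExtPairs F T V w).ncard := by
  have hunion : genExtPairs F (S ∪ T) V w = genExtPairs F S V w ∪ genExtPairs F T V w := by
    ext p
    simp only [genExtPairs, mem_union, mem_ofPred_eq]
    tauto
  rw [hunion]
  exact ncard_union_eq (disjoint_left.2 fun p hp hp' => disjoint_left.1 hST hp.1 hp'.1)
    ((hS.prod hV).subset fun p hp => ⟨hp.1, hp.2.1⟩)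
    ((hT.prod hV).subset fun p hp => ⟨hp.1, hp.2.1⟩)

lemma genExtPairs_singleton : genExtPairs F {m} V w = (m, ·) '' {v ∈ V | m ++ w ++ v ∈ F} := by
  ext ⟨l, r⟩
  constructor
  · rintro ⟨rfl, hr, he⟩
    exact ⟨r, ⟨hr, he⟩, rfl⟩
  · rintro ⟨r, ⟨hr, he⟩, h⟩
    obtain ⟨rfl, rfl⟩ := Prod.mk.inj h
    exact ⟨rfl, hr, he⟩

lemma genExtPairs_image_append (hF : Factorial F) (L : Set (List A)) :
    genExtPairs F ((· ++ m) '' L) V w =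
      Prod.map (· ++ m) id '' genExtPairs F L {v ∈ V | m ++ w ++ v ∈ F} (m ++ w) := by
  ext ⟨x, r⟩
  constructor
  · rintro ⟨⟨l, hl, rfl⟩, hr, he⟩
    exact ⟨(l, r), ⟨hl, ⟨hr, hF he ⟨l, [], by simp⟩⟩, by simpa using he⟩, rfl⟩
  · rintro ⟨⟨l, r⟩, ⟨hl, ⟨hr, -⟩, he⟩, h⟩
    obtain ⟨rfl, rfl⟩ := Prod.mk.inj h
    exact ⟨⟨l, hl, rfl⟩, hr, by simpa using he⟩

lemma inter_range_cons_eq_image (hU : U ⊆ {s | s ++ w ∈ F})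
    (hB : ∀ c : A, c :: m ++ w ∈ F → c :: m ∈ U) :
    U ∩ range (· :: m) = (· ++ m) '' {l ∈ {s | s ++ (m ++ w) ∈ F} | l.length = 1} := by
  ext x
  constructor
  · rintro ⟨hx, c, rfl⟩
    exact ⟨[c], ⟨by simpa using hU hx, rfl⟩, rfl⟩
  · rintro ⟨l, ⟨hl, hl₁⟩, rfl⟩
    obtain ⟨c, rfl⟩ := List.length_eq_one_iff.1 hl₁
    exact ⟨hB c (by simpa using hl), c, rfl⟩

lemma genExtGraph_reachable_of_connected_tail (hF : Factorial F) (hU : U ⊆ {s | s ++ w ∈ F})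
    (ha : a :: m ∈ U) (hB : ∀ c : A, c :: m ++ w ∈ F → c :: m ∈ U)
    (hT : (genExtGraph F {l ∈ {s | s ++ (m ++ w) ∈ F} | l.length = 1}
      {v ∈ V | m ++ w ++ v ∈ F} (m ++ w)).Connected) :
    (∀ c (hc : c :: m ∈ U ∧ c :: m ++ w ∈ F),
      (genExtGraph F U V w).Reachable (.inl ⟨a :: m, ha, hU ha⟩) (.inl ⟨c :: m, hc⟩)) ∧
    ∀ r (hr : r ∈ V ∧ w ++ r ∈ F), m ++ w ++ r ∈ F →
      (genExtGraph F U V w).Reachable (.inl ⟨a :: m, ha, hU ha⟩) (.inr ⟨r, hr⟩) := by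
  have hLU : ∀ l ∈ {l ∈ {s | s ++ (m ++ w) ∈ F} | l.length = 1}, l ++ m ∈ U := fun l hl =>
    ((inter_range_cons_eq_image hU hB).symm ▸ mem_image_of_mem (· ++ m) hl).1
  let φl : {l // l ∈ {l ∈ {s | s ++ (m ++ w) ∈ F} | l.length = 1} ∧ l ++ (m ++ w) ∈ F} →
      {l // l ∈ U ∧ l ++ w ∈ F} := fun l => ⟨l.1 ++ m, hLU l.1 l.2.1, by simpa using l.2.2⟩
  let φr : {r // r ∈ {v ∈ V | m ++ w ++ v ∈ F} ∧ m ++ w ++ r ∈ F} →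
      {r // r ∈ V ∧ w ++ r ∈ F} := fun r => ⟨r.1, r.2.1.1, hF r.2.2 ⟨m, [], by simp⟩⟩
  have hφ : ∀ x y, (genExtGraph F U V w).Reachable (Sum.map φl φr x) (Sum.map φl φr y) :=
    fun x y => bipGraph_reachable_sumMap φl φr
      (fun l r he => (bipGraph_adj_inl_inr.2 (by simpa [φl, φr] using he)).reachable)
      (hT.preconnected x y)
  have haT : [a] ++ (m ++ w) ∈ F := by simpa using hU ha
  exact ⟨fun c hc => hφ (.inl ⟨[a], ⟨haT, rfl⟩, haT⟩) (.inl ⟨[c], ⟨hc.2, rfl⟩, hc.2⟩),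
    fun r hr he => hφ (.inl ⟨[a], ⟨haT, rfl⟩, haT⟩) (.inr ⟨r, ⟨hr.1, he⟩, he⟩)⟩

lemma genExtGraph_connected_of_collapse (hF : Factorial F) (hU : U ⊆ {s | s ++ w ∈ F})
    (ha : a :: m ∈ U) (hmU : m ∉ U) (hB : ∀ c : A, c :: m ++ w ∈ F → c :: m ∈ U)
    (hG' : (genExtGraph F (U \ range (· :: m) ∪ {m}) V w).Connected)
    (hT : (genExtGraph F {l ∈ {s | s ++ (m ++ w) ∈ F} | l.length = 1}
      {v ∈ V | m ++ w ++ v ∈ F} (m ++ w)).Connected) :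
    (genExtGraph F U V w).Connected := by
  classical
  obtain ⟨hcons, htail⟩ := genExtGraph_reachable_of_connected_tail hF hU ha hB hT
  -- `m ↦ a :: m` sends the edges of `G_{U',V}(w)` at `m` to paths through the copy of the
  -- graph `G_{A,V(mw)}(mw)`
  let ψ : {l // l ∈ U \ range (· :: m) ∪ {m} ∧ l ++ w ∈ F} → {l // l ∈ U ∧ l ++ w ∈ F} :=
    fun l => if h : l.1 = m then ⟨a :: m, ha, hU ha⟩ else ⟨l.1, (l.2.1.resolve_right h).1, l.2.2⟩
  have hψ : ∀ x y, (genExtGraph F U V w).Reachable (Sum.map ψ id x) (Sum.map ψ id y) :=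
    fun x y => bipGraph_reachable_sumMap ψ id (fun l r he => by
      by_cases h : l.1 = m
      · simp only [ψ, dif_pos h]
        exact htail r.1 r.2 (h ▸ he)
      · simp only [ψ, dif_neg h]
        exact Adj.reachable (bipGraph_adj_inl_inr.2 he))
      (hG'.preconnected x y)
  let y₀ : {l // l ∈ U \ range (· :: m) ∪ {m} ∧ l ++ w ∈ F} :=
    ⟨m, .inr rfl, hF (hU ha) ⟨[a], [], by simp⟩⟩
  have hψy₀ : ψ y₀ = ⟨a :: m, ha, hU ha⟩ := dif_pos rfl
  refine (connected_iff_exists_forall_reachable _).2 ⟨.inl ⟨a :: m, ha, hU ha⟩, ?_⟩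
  rintro (⟨l, hl, hlw⟩ | ⟨r, hr⟩)
  · by_cases hlB : l ∈ range (· :: m)
    · obtain ⟨c, rfl⟩ := hlB
      exact hcons c ⟨hl, hlw⟩
    · have hlm : l ≠ m := fun h => hmU (h ▸ hl)
      simpa [hψy₀, ψ, dif_neg hlm] using hψ (.inl y₀) (.inl ⟨l, .inl ⟨hl, hlB⟩, hlw⟩)
  · simpa [hψy₀] using hψ (.inl y₀) (.inr ⟨r, hr⟩)

lemma genExtGraph_isTree_of_collapse (hF : Factorial F) (hUfin : U.Finite) (hVfin : V.Finite)
    (hU : U ⊆ {s | s ++ w ∈ F}) (hV : V ⊆ {p | w ++ p ∈ F})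
    (ha : a :: m ∈ U) (hmU : m ∉ U) (hB : ∀ c : A, c :: m ++ w ∈ F → c :: m ∈ U)
    (hG' : (genExtGraph F (U \ range (· :: m) ∪ {m}) V w).IsTree)
    (hT : (genExtGraph F {l ∈ {s | s ++ (m ++ w) ∈ F} | l.length = 1}
      {v ∈ V | m ++ w ++ v ∈ F} (m ++ w)).IsTree) :
    (genExtGraph F U V w).IsTree := by
  set B := range (· :: m)
  set L := {l ∈ {s | s ++ (m ++ w) ∈ F} | l.length = 1}
  set Vm := {v ∈ V | m ++ w ++ v ∈ F}
  have hUB : U ∩ B = (· ++ m) '' L := inter_range_cons_eq_image hU hB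
  have hLfin : L.Finite :=
    .of_finite_image (hUB ▸ hUfin.inter_of_left B) (List.append_left_injective m).injOn
  have hVmfin : Vm.Finite := hVfin.subset (sep_subset V _)
  have hUsplit : U \ B ∪ U ∩ B = U := sdiff_union_inter U B
  have hmB : Disjoint (U \ B) {m} := disjoint_singleton_right.2 fun h => hmU h.1
  have hpairs : (genExtPairs F U V w).ncard + Vm.ncard =
      (genExtPairs F (U \ B ∪ {m}) V w).ncard + (genExtPairs F L Vm (m ++ w)).ncard := by
    have hsplit := ncard_genExtPairs_union (F := F) (w := w) disjoint_sdiff_inter hUfin.sdiff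
      (hUfin.inter_of_left B) hVfin
    rw [hUsplit, hUB, genExtPairs_image_append hF, ncard_image_of_injective _
      ((List.append_left_injective m).prodMap Function.injective_id)] at hsplit
    rw [hsplit, ncard_genExtPairs_union hmB hUfin.sdiff (finite_singleton m) hVfin,
      genExtPairs_singleton, ncard_image_of_injective _ (Prod.mk_right_injective m)]
    ring
  rw [genExtGraph_isTree_iff hF hUfin hVfin hU hV]
  rw [genExtGraph_isTree_iff hF (hUfin.sdiff.union (finite_singleton m)) hVfin ?_ hV] at hG'
  rw [genExtGraph_isTree_iff hF hLfin hVmfin (fun l hl => hl.1) (fun v hv => hv.2)] at hT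
  · refine ⟨genExtGraph_connected_of_collapse hF hU ha hmU hB hG'.1 hT.1, ?_⟩
    have := ncard_union_eq disjoint_sdiff_inter hUfin.sdiff (hUfin.inter_of_left B)
    rw [hUsplit, hUB, ncard_image_of_injective L (List.append_left_injective m)] at this
    rw [ncard_union_eq hmB hUfin.sdiff (finite_singleton m), ncard_singleton] at hG'
    omega
  · rintro u (⟨hu, -⟩ | rfl)
    exacts [hU hu, hF (hU ha) ⟨[a], [], by simp⟩]

section Reverse

variable {F U V : Set (List A)} {w : List A}

lemma Factorial.preimage_reverse (hF : Factorial F) : Factorial (List.reverse ⁻¹' F) :=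
  fun _ _ hu hv => hF hu (List.reverse_infix.2 hv)

lemma Biessential.preimage_reverse (hF : Biessential F) : Biessential (List.reverse ⁻¹' F) := by
  refine ⟨hF.1.preimage_reverse, fun w hw => ?_⟩
  obtain ⟨a, b, hab⟩ := hF.2 w.reverse hw
  exact ⟨b, a, by simpa using hab⟩

lemma IsTreeSet.preimage_reverse (hF : IsTreeSet F) : IsTreeSet (List.reverse ⁻¹' F) := by
  refine ⟨hF.1.preimage_reverse, fun w hw => ?_⟩
  refine (bipGraphIsoSwap (Equiv.subtypeEquivRight fun a => ?_)
    (Equiv.subtypeEquivRight fun b => ?_) fun a b => ?_).isTree_iff.1 (hF.2 w.reverse hw)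
  · simp [LeftExt, RightExt]
  · simp [LeftExt, RightExt]
  · change _ ↔ (b.1 :: (w ++ [a.1])).reverse ∈ F
    simp

lemma genExtGraph_preimage_reverse_isTree_iff :
    (genExtGraph (List.reverse ⁻¹' F) (List.reverse ⁻¹' V) (List.reverse ⁻¹' U)
      w.reverse).IsTree ↔ (genExtGraph F U V w).IsTree :=
  (bipGraphIsoSwap (Equiv.subtypeEquiv (List.reverse_involutive.toPerm _) fun l => by simp)
    (Equiv.subtypeEquiv (List.reverse_involutive.toPerm _) fun l => by simp)
    fun l r => by simp [Equiv.subtypeEquiv]).isTree_iff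

end Reverse

section Weight

noncomputable def codeWeight (U : Set (List A)) : ℕ := ∑ᶠ u ∈ U, (u.length - 1)

variable {U V : Set (List A)}

lemma codeWeight_union (h : Disjoint U V) (hU : U.Finite) (hV : V.Finite) :
    codeWeight (U ∪ V) = codeWeight U + codeWeight V :=
  finsum_mem_union h hU hV

lemma codeWeight_mono (hV : V.Finite) (h : U ⊆ V) : codeWeight U ≤ codeWeight V := by
  rw [← union_sdiff_cancel h, codeWeight_union disjoint_sdiff_right (hV.subset h) hV.sdiff]
  exact Nat.le_add_right _ _

lemma length_sub_one_le_codeWeight (hU : U.Finite) {u : List A} (hu : u ∈ U) :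
    u.length - 1 ≤ codeWeight U :=
  (finsum_mem_singleton (f := fun u : List A => u.length - 1)).symm.trans_le
    (codeWeight_mono hU (singleton_subset_iff.2 hu))

lemma codeWeight_eq_zero (h : ∀ u ∈ U, u.length = 1) : codeWeight U = 0 :=
  finsum_mem_eq_zero_of_forall_eq_zero fun u hu => by simp [h u hu]

lemma codeWeight_preimage_reverse : codeWeight (List.reverse ⁻¹' U) = codeWeight U :=
  finsum_mem_eq_of_bijOn List.reverse
    ⟨fun _ h => h, List.reverse_injective.injOn, fun u hu => ⟨u.reverse, by simpa, by simp⟩⟩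
    fun u _ => by simp

end Weight

section Induction

variable {F U V : Set (List A)} {w : List A}

noncomputable def singletonEquiv (P : List A → Prop) :
    {a : A // P [a]} ≃ {l : List A // (P l ∧ l.length = 1) ∧ P l} :=
  .ofBijective (fun a => ⟨[a.1], ⟨a.2, rfl⟩, a.2⟩)
    ⟨fun _ _ h => Subtype.ext (List.singleton_injective (congrArg Subtype.val h)),
      fun ⟨l, ⟨hl, hl₁⟩, _⟩ => by
        obtain ⟨c, rfl⟩ := List.length_eq_one_iff.1 hl₁
        exact ⟨⟨c, hl⟩, rfl⟩⟩

theorem genExtGraph_isTree_of_forall_length_eq_one (hF : IsTreeSet F) (hw : w ∈ F)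
    (hU : IsMaximalSuffixCodeIn {s | s ++ w ∈ F} U) (hV : IsMaximalPrefixCodeIn {p | w ++ p ∈ F} V)
    (hUlen : ∀ u ∈ U, u.length = 1) (hVlen : ∀ v ∈ V, v.length = 1) :
    (genExtGraph F U V w).IsTree := by
  obtain rfl := hU.eq_setOf_length_eq_one hUlen
  obtain rfl := hV.eq_setOf_length_eq_one hVlen
  exact (bipGraphIso (singletonEquiv fun l => l ++ w ∈ F) (singletonEquiv fun r => w ++ r ∈ F)
    fun a b => Iff.rfl).isTree_iff.1 (hF.2 w hw)

theorem genExtGraph_isTree_of_exists_length_ge_two (hF : IsTreeSet F) (hw : w ∈ F)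
    (hUfin : U.Finite) (hVfin : V.Finite) (hU : IsMaximalSuffixCodeIn {s | s ++ w ∈ F} U)
    (hV : IsMaximalPrefixCodeIn {p | w ++ p ∈ F} V) (hlong : ∃ u ∈ U, 2 ≤ u.length)
    (ih : ∀ w' ∈ F, ∀ U' V' : Set (List A), U'.Finite → IsMaximalSuffixCodeIn {s | s ++ w' ∈ F} U' →
      V'.Finite → IsMaximalPrefixCodeIn {p | w' ++ p ∈ F} V' →
      codeWeight U' + codeWeight V' < codeWeight U + codeWeight V →
      (genExtGraph F U' V' w').IsTree) :
    (genExtGraph F U V w).IsTree := by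
  obtain ⟨u, hu, hu₂⟩ := hlong
  obtain ⟨_, ha, hmax⟩ := exists_max_image U List.length hUfin ⟨u, hu⟩
  obtain ⟨a, m, rfl⟩ := List.exists_cons_of_ne_nil (hU.1.1 _ ha)
  have hlen : ∀ u ∈ U, u.length ≤ m.length + 1 := hmax
  have hm : 1 ≤ m.length := by have := hlen u hu; omega
  have hmw : m ++ w ∈ F := hF.1.1 (hU.2.1 ha) ⟨[a], [], by simp⟩
  have hB : ∀ c : A, c :: m ++ w ∈ F → c :: m ∈ U := fun c =>
    cons_mem_of_forall_length_le hU ha hlen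
  have hmU : m ∉ U := hU.1.tail_not_mem ha
  have hweight : codeWeight (U \ range (· :: m)) + m.length ≤ codeWeight U := by
    have hsplit := codeWeight_union disjoint_sdiff_inter hUfin.sdiff
      (hUfin.inter_of_left (range (· :: m)))
    rw [sdiff_union_inter] at hsplit
    have := length_sub_one_le_codeWeight (hUfin.inter_of_left _)
      (⟨ha, a, rfl⟩ : a :: m ∈ U ∩ range (· :: m))
    simp only [List.length_cons, Nat.add_sub_cancel] at this
    omega
  refine genExtGraph_isTree_of_collapse hF.1.1 hUfin hVfin hU.2.1 hV.2.1 ha hmU hB ?_ ?_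
  · refine ih w hw _ V (hUfin.sdiff.union (finite_singleton m))
      (isMaximalSuffixCodeIn_collapse hF.1.1 hU ha hB (List.ne_nil_of_length_pos hm)) hVfin hV ?_
    rw [codeWeight_union (disjoint_singleton_right.2 fun h => hmU h.1) hUfin.sdiff
      (finite_singleton m)]
    simp only [codeWeight, finsum_mem_singleton] at hweight ⊢
    omega
  · refine ih (m ++ w) hmw _ _ ?_ (isMaximalSuffixCodeIn_setOf_length_eq_one fun s t h =>
      hF.1.1 h ⟨s, [], by simp⟩) (hVfin.subset (sep_subset V _)) (hV.restrict hF.1 hVfin m) ?_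
    · exact .of_finite_image (inter_range_cons_eq_image hU.2.1 hB ▸ hUfin.inter_of_left _)
        (List.append_left_injective m).injOn
    · rw [codeWeight_eq_zero fun l hl => hl.2]
      have := codeWeight_mono hVfin (sep_subset V fun v => m ++ w ++ v ∈ F)
      omega

end Induction

/-- In a tree set `F`, for every `w ∈ F`, every finite `Fw⁻¹`-maximal suffix code `U` and
every finite `w⁻¹F`-maximal prefix code `V`, the generalized extension graph `G_{U,V}(w)`
is a tree. -/
theorem genExtGraph_isTree_residual (F : Set (List A)) (hF : IsTreeSet F) (w : List A)
    (hw : w ∈ F) (U V : Set (List A)) (hUfin : U.Finite)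
    (hU : IsMaximalSuffixCodeIn {s : List A | s ++ w ∈ F} U)
    (hVfin : V.Finite) (hV : IsMaximalPrefixCodeIn {p : List A | w ++ p ∈ F} V) :
    (genExtGraph F U V w).IsTree := by
  obtain ⟨n, hn⟩ : ∃ n, codeWeight U + codeWeight V = n := ⟨_, rfl⟩
  induction n using Nat.strong_induction_on generalizing F w U V with
  | _ n ih =>
  by_cases hlongU : ∃ u ∈ U, 2 ≤ u.length
  · exact genExtGraph_isTree_of_exists_length_ge_two hF hw hUfin hVfin hU hV hlongU
      fun w' hw' U' V' hU'fin hU' hV'fin hV' hlt =>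
        ih _ (hn ▸ hlt) F hF w' hw' U' V' hU'fin hU' hV'fin hV' rfl
  by_cases hlongV : ∃ v ∈ V, 2 ≤ v.length
  · have hrev : ∀ {S : Set (List A)} (hS : S.Finite), (List.reverse ⁻¹' S).Finite :=
      fun hS => hS.preimage List.reverse_injective.injOn
    rw [← genExtGraph_preimage_reverse_isTree_iff]
    refine genExtGraph_isTree_of_exists_length_ge_two hF.preimage_reverse (by simpa using hw)
      (hrev hVfin) (hrev hUfin) ?_ ?_ ?_ fun w' hw' U' V' hU'fin hU' hV'fin hV' hlt => ?_
    · convert hV.preimage_reverse using 1; ext; simp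
    · convert hU.preimage_reverse using 1; ext; simp
    · obtain ⟨v, hv, hv₂⟩ := hlongV
      exact ⟨v.reverse, by simpa using hv, by simpa using hv₂⟩
    · rw [codeWeight_preimage_reverse, codeWeight_preimage_reverse] at hlt
      exact ih _ (by omega) _ hF.preimage_reverse w' hw' U' V' hU'fin hU' hV'fin hV' rfl
  push Not at hlongU hlongV
  refine genExtGraph_isTree_of_forall_length_eq_one hF hw hU hV (fun u hu => ?_) fun v hv => ?_
  · have := List.length_pos_iff.2 (hU.1.1 u hu); have := hlongU u hu; omega
  · have := List.length_pos_iff.2 (hV.1.1 v hv); have := hlongV v hv; omega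
end GenExtGraph
end

section
/- Let A be an alphabet with exactly three letters and let F be a uniformly recurrent tree set over A with A ⊆ F. Let x ∈ F be a bispecial word of length n, and assume the Rauzy graph G_n of F is of the first infinite type with respect to x and a second special vertex y and words u, v, w, t. Set Y = { wᵏ t : k ≥ 0 }. Let m ≥ 0 be such that z = y wᵐ ∈ F. Then V = Y ∩ z⁻¹F is a z⁻¹F-maximal prefix code, where z⁻¹F = {p ∈ A* : zp ∈ F}. -/
open List

variable {A : Type*}

/-! In the Rauzy graph the walk from `y` next meets a special vertex after reading either `w`
(back at `y`) or `t` (at `x`). Two such first returns cannot have comparable labels, so `w` and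
`t` are prefix-incomparable and `w^*t` is a prefix code. Reading `z = ywᵐ` from `y` leads back to
`y`, and by uniform recurrence every word of `z⁻¹F` extends to a word `c` of `z⁻¹F` with `x` a
suffix of `zc`; the walk from `y` reading `c` then reaches `x`, so it decomposes as first returns
`w, …, w, t`, i.e. some `wᵏt ∈ z⁻¹F` is a prefix of `c` and hence comparable with the given word. -/

lemma wordPow_succ (w : List A) (k : ℕ) : wordPow w (k + 1) = w ++ wordPow w k := by
  simp [wordPow, List.replicate_succ]

lemma IsPrefixCode.mono {U V : Set (List A)} (hV : IsPrefixCode V) (hUV : U ⊆ V) :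
    IsPrefixCode U :=
  ⟨fun u hu => hV.1 u (hUV hu), fun u hu v hv => hV.2 u (hUV hu) v (hUV hv)⟩

lemma isMaximalPrefixCodeIn_of_forall_exists_comparable {S V : Set (List A)}
    (hV : IsPrefixCode V) (hVS : V ⊆ S)
    (h : ∀ p ∈ S, p ≠ [] → ∃ v ∈ V, p <+: v ∨ v <+: p) : IsMaximalPrefixCodeIn S V := by
  refine ⟨hV, hVS, fun W hW hWS hVW => hVW.antisymm fun p hp => ?_⟩
  obtain ⟨v, hv, hpv | hvp⟩ := h p (hWS hp) (hW.1 p hp)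
  · rwa [hW.2 p hp v (hVW hv) hpv]
  · rwa [← hW.2 v (hVW hv) p hp hvp]

lemma eq_of_wordPow_append_prefix {w t : List A} (hwt : ¬ w <+: t) (htw : ¬ t <+: w) :
    ∀ {k j : ℕ}, wordPow w k ++ t <+: wordPow w j ++ t → k = j
  | 0, 0, _ => rfl
  | 0, j + 1, h => by
    rw [wordPow_succ, List.append_assoc] at h
    exact ((List.prefix_or_prefix_of_prefix h (List.prefix_append _ _)).elim htw hwt).elim
  | k + 1, 0, h => by
    rw [wordPow_succ, List.append_assoc] at h
    exact (hwt ((List.prefix_append _ _).trans h)).elim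
  | k + 1, j + 1, h => by
    rw [wordPow_succ, wordPow_succ, List.append_assoc, List.append_assoc,
      List.prefix_append_right_inj] at h
    rw [eq_of_wordPow_append_prefix hwt htw h]

lemma isPrefixCode_wordPow_append {w t : List A} (hwt : ¬ w <+: t) (htw : ¬ t <+: w) :
    IsPrefixCode {p : List A | ∃ k : ℕ, p = wordPow w k ++ t} := by
  refine ⟨?_, ?_⟩
  · rintro _ ⟨k, rfl⟩ h
    exact htw (by simp [(List.append_eq_nil_iff.mp h).2])
  · rintro _ ⟨k, rfl⟩ _ ⟨j, rfl⟩ h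
    rw [eq_of_wordPow_append_prefix hwt htw h]

section UniformlyRecurrent

variable {F : Set (List A)}

lemma UniformlyRecurrent.exists_append_mem (hF : UniformlyRecurrent F) (N : ℕ) :
    ∀ {u : List A}, u ∈ F → ∃ q : List A, q.length = N ∧ u ++ q ∈ F := by
  induction N with
  | zero => exact fun hu => ⟨[], rfl, by simpa⟩
  | succ N ih =>
    intro u hu
    obtain ⟨a, ha⟩ := hF.2.1 u hu
    obtain ⟨q, hq, hmem⟩ := ih ha
    exact ⟨a :: q, by simp [hq], by simpa using hmem⟩

lemma UniformlyRecurrent.exists_extension_isSuffix (hF : UniformlyRecurrent F) {x z p : List A}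
    (hx : x ∈ F) (hp : z ++ p ∈ F) : ∃ c, p <+: c ∧ z ++ c ∈ F ∧ x <:+ z ++ c := by
  obtain ⟨N, -, hN⟩ := hF.2.2 x hx
  obtain ⟨q, hq, hmem⟩ := hF.exists_append_mem N hp
  obtain ⟨a, b, rfl⟩ := hN q (hF.1 hmem (List.suffix_append _ _).isInfix) hq
  refine ⟨p ++ a ++ x, by simp [List.append_assoc], hF.1 hmem ?_, ⟨z ++ p ++ a, by simp⟩⟩
  exact ⟨[], b, by simp⟩

end UniformlyRecurrent

section RauzyGraph

variable {F : Set (List A)} {n : ℕ}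

inductive RauzyWalk (F : Set (List A)) (n : ℕ) :
    RauzyVertex F n → List A → RauzyVertex F n → Prop
  | nil (p : RauzyVertex F n) : RauzyWalk F n p [] p
  | cons {p q r : RauzyVertex F n} {a : A} {l : List A} :
      RauzyEdge F n p a q → RauzyWalk F n q l r → RauzyWalk F n p (a :: l) r

namespace RauzyWalk

lemma isSuffix {p r : RauzyVertex F n} {l : List A} (h : RauzyWalk F n p l r) :
    r.1 <:+ p.1 ++ l := by
  induction h with
  | nil p => simp
  | @cons p q r a l e _ ih =>
    obtain ⟨-, b, hb⟩ := e
    obtain ⟨s, hs⟩ := ih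
    exact ⟨b :: s, by rw [List.cons_append, hs, ← List.cons_append, ← hb, List.append_assoc,
      List.singleton_append]⟩

lemma eq_of_isSuffix {p r : RauzyVertex F n} {l x : List A} (h : RauzyWalk F n p l r)
    (hx : x <:+ p.1 ++ l) (hxn : x.length = n) : r.1 = x :=
  (List.suffix_of_suffix_length_le h.isSuffix hx (by rw [r.2.2, hxn])).eq_of_length
    (by rw [r.2.2, hxn])

lemma unique {p r r' : RauzyVertex F n} {l : List A} (h : RauzyWalk F n p l r)
    (h' : RauzyWalk F n p l r') : r = r' :=
  Subtype.ext (h.eq_of_isSuffix h'.isSuffix r'.2.2)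

lemma append {p q r : RauzyVertex F n} {l₁ l₂ : List A}
    (h₁ : RauzyWalk F n p l₁ q) (h₂ : RauzyWalk F n q l₂ r) : RauzyWalk F n p (l₁ ++ l₂) r := by
  induction h₁ with
  | nil => exact h₂
  | cons e _ ih => exact cons e (ih h₂)

lemma exists_of_append {p r : RauzyVertex F n} {l₁ l₂ : List A}
    (h : RauzyWalk F n p (l₁ ++ l₂) r) : ∃ q, RauzyWalk F n p l₁ q ∧ RauzyWalk F n q l₂ r := by
  induction l₁ generalizing p with
  | nil => exact ⟨p, nil p, h⟩
  | cons a l₁ ih =>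
    cases h with
    | cons e h =>
      obtain ⟨q, h₁, h₂⟩ := ih h
      exact ⟨q, cons e h₁, h₂⟩

lemma of_append_left {p q r : RauzyVertex F n} {l₁ l₂ : List A}
    (h : RauzyWalk F n p (l₁ ++ l₂) r) (h₁ : RauzyWalk F n p l₁ q) : RauzyWalk F n q l₂ r := by
  obtain ⟨q', h₁', h₂⟩ := h.exists_of_append
  rwa [h₁.unique h₁']

lemma wordPow {p : RauzyVertex F n} {w : List A} (h : RauzyWalk F n p w p) (k : ℕ) :
    RauzyWalk F n p (wordPow w k) p := by
  induction k with
  | zero => exact nil p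
  | succ k ih => rw [wordPow_succ]; exact h.append ih

lemma exists_of_append_mem (hF : Factorial F) :
    ∀ {l : List A} {p : RauzyVertex F n}, p.1 ++ l ∈ F → ∃ r, RauzyWalk F n p l r
  | [], p, _ => ⟨p, nil p⟩
  | a :: l, p, hmem => by
    obtain ⟨b, s, hbs⟩ := List.exists_cons_of_ne_nil (List.append_ne_nil_of_right_ne_nil p.1
      (List.cons_ne_nil a []))
    have hpa : p.1 ++ [a] ∈ F := hF hmem ⟨[], l, by simp⟩
    have hs : s ∈ F ∧ s.length = n := ⟨hF hpa (hbs ▸ List.suffix_cons b s).isInfix,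
      by simpa [p.2.2] using (congrArg List.length hbs).symm⟩
    have hsl : s ++ l ∈ F :=
      hF hmem ⟨[b], [], by simp [show p.1 ++ a :: l = b :: s ++ l by rw [← hbs]; simp]⟩
    obtain ⟨r, hr⟩ := exists_of_append_mem hF (p := ⟨s, hs⟩) hsl
    exact ⟨r, cons ⟨hpa, b, hbs⟩ hr⟩

lemma exists_nsPath_prefix {p s : RauzyVertex F n} {c : List A}
    (h : RauzyWalk F n p c s) (hc : c ≠ []) (hs : SpecialWord F s.1) :
    ∃ d₁ d₂ s', c = d₁ ++ d₂ ∧ NSPath F n p s' d₁ ∧ SpecialWord F s'.1 ∧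
      RauzyWalk F n s' d₂ s := by
  induction h with
  | nil => exact absurd rfl hc
  | @cons p q r a l e h ih =>
    by_cases hq : SpecialWord F q.1
    · exact ⟨[a], l, q, rfl, .single e, hq, h⟩
    · rcases l with _ | ⟨b, l⟩
      · cases h; exact absurd hs hq
      obtain ⟨d₁, d₂, s', hd, hp, hs', hw⟩ := ih (List.cons_ne_nil b l) hs
      exact ⟨a :: d₁, d₂, s', by simp [hd], .cons e hq hp, hs', hw⟩

end RauzyWalk

lemma RauzyEdge.unique {p q q' : RauzyVertex F n} {a : A} (e : RauzyEdge F n p a q)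
    (e' : RauzyEdge F n p a q') : q = q' :=
  RauzyWalk.unique (.cons e (.nil q)) (.cons e' (.nil q'))

namespace NSPath

lemma rauzyWalk {p q : RauzyVertex F n} {l : List A} (h : NSPath F n p q l) :
    RauzyWalk F n p l q := by
  induction h with
  | single e => exact .cons e (.nil _)
  | cons e _ _ ih => exact .cons e ih

lemma ne_nil {p q : RauzyVertex F n} {l : List A} (h : NSPath F n p q l) : l ≠ [] := by
  cases h <;> simp

lemma eq_of_prefix {p q₁ q₂ : RauzyVertex F n} {l₁ l₂ : List A} (h₁ : NSPath F n p q₁ l₁)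
    (h₂ : NSPath F n p q₂ l₂) (hq₁ : SpecialWord F q₁.1) (hl : l₁ <+: l₂) : l₁ = l₂ := by
  obtain ⟨r, rfl⟩ := hl
  rcases r with _ | ⟨c, d⟩
  · simp
  exfalso
  induction h₁ with
  | @single p q a e =>
    rw [List.singleton_append] at h₂
    cases h₂ with
    | cons e' hq' _ => exact hq' (e.unique e' ▸ hq₁)
  | @cons p q r a l e _ _ ih =>
    rw [List.cons_append] at h₂
    generalize hL : l ++ c :: d = L at h₂
    cases h₂ with
    | single _ => simp at hL
    | cons e' _ h₂ =>
      subst hL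
      obtain rfl := e.unique e'
      exact ih hq₁ h₂

end NSPath

end RauzyGraph

namespace FirstInfiniteType

variable {F : Set (List A)} {n : ℕ} {x y : RauzyVertex F n} {u v w t : List A}

lemma nsPath_w (h : FirstInfiniteType F n x y u v w t) : NSPath F n y y w :=
  (h.2.2.2.2 y y (.inr rfl) (.inr rfl) w).2 (.inr (.inr (.inl ⟨rfl, rfl, rfl⟩)))

lemma nsPath_t (h : FirstInfiniteType F n x y u v w t) : NSPath F n y x t :=
  (h.2.2.2.2 y x (.inr rfl) (.inl rfl) t).2 (.inr (.inr (.inr ⟨rfl, rfl, rfl⟩)))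

lemma nsPath_eq_w_or_t {s : RauzyVertex F n} {l : List A} (h : FirstInfiniteType F n x y u v w t)
    (hl : NSPath F n y s l) (hs : SpecialWord F s.1) : s = y ∧ l = w ∨ s = x ∧ l = t := by
  rcases (h.2.2.2.2 y s (.inr rfl) (h.2.2.2.1 s hs) l).1 hl with h' | h' | h' | h'
  · exact absurd h'.1.symm h.1
  · exact absurd h'.1.symm h.1
  · exact .inl h'.2
  · exact .inr h'.2

lemma not_prefix_w_t (h : FirstInfiniteType F n x y u v w t) : ¬ w <+: t ∧ ¬ t <+: w := by
  have hwt : w ≠ t := fun hwt => h.1 (h.nsPath_t.rauzyWalk.unique (hwt ▸ h.nsPath_w.rauzyWalk))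
  exact ⟨fun hp => hwt (h.nsPath_w.eq_of_prefix h.nsPath_t h.2.2.1 hp),
    fun hp => hwt (h.nsPath_t.eq_of_prefix h.nsPath_w h.2.1 hp).symm⟩

lemma exists_prefix_of_rauzyWalk (h : FirstInfiniteType F n x y u v w t) {c : List A}
    (hc : RauzyWalk F n y c x) : ∃ k, wordPow w k ++ t <+: c := by
  have hcne : c ≠ [] := by rintro rfl; cases hc; exact h.1 rfl
  obtain ⟨d₁, d₂, s, rfl, hd₁, hs, hd₂⟩ := hc.exists_nsPath_prefix hcne h.2.1
  rcases h.nsPath_eq_w_or_t hd₁ hs with ⟨hsy, hdw⟩ | ⟨-, rfl⟩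
  · have : d₂.length < (d₁ ++ d₂).length := by simp [List.length_pos_iff.2 hd₁.ne_nil]
    obtain ⟨k, hk⟩ := exists_prefix_of_rauzyWalk h (hsy ▸ hd₂)
    exact ⟨k + 1, by simpa [hdw, wordPow_succ, List.append_assoc] using hk⟩
  · exact ⟨0, by simp [wordPow]⟩
termination_by c.length

lemma exists_comparable (h : FirstInfiniteType F n x y u v w t) (hF : UniformlyRecurrent F)
    {m : ℕ} {p : List A} (hp : y.1 ++ wordPow w m ++ p ∈ F) :
    ∃ k, y.1 ++ wordPow w m ++ (wordPow w k ++ t) ∈ F ∧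
      (p <+: wordPow w k ++ t ∨ wordPow w k ++ t <+: p) := by
  obtain ⟨c, hpc, hcF, hxc⟩ := hF.exists_extension_isSuffix x.2.1 hp
  rw [List.append_assoc] at hcF hxc
  obtain ⟨r, hr⟩ := RauzyWalk.exists_of_append_mem hF.1 hcF
  have hrx : r = x := Subtype.ext (hr.eq_of_isSuffix hxc x.2.2)
  have hc : RauzyWalk F n y c x := hrx ▸ hr.of_append_left (h.nsPath_w.rauzyWalk.wordPow m)
  obtain ⟨k, hk⟩ := h.exists_prefix_of_rauzyWalk hc
  refine ⟨k, hF.1 hcF ?_, List.prefix_or_prefix_of_prefix hpc hk⟩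
  obtain ⟨s, hs⟩ := hk
  exact ⟨[], s, by simp [← hs]⟩

end FirstInfiniteType

theorem maximal_prefix_code_infinite_case_general
    (F : Set (List A)) (hUR : UniformlyRecurrent F)
    (x : List A) (hx : x ∈ F)
    (y : RauzyVertex F x.length) (u v w t : List A)
    (htype : FirstInfiniteType F x.length ⟨x, hx, rfl⟩ y u v w t)
    (m : ℕ) :
    IsMaximalPrefixCodeIn {p : List A | (y.1 ++ wordPow w m) ++ p ∈ F}
      ({p : List A | ∃ k : ℕ, p = wordPow w k ++ t} ∩
        {p : List A | (y.1 ++ wordPow w m) ++ p ∈ F}) := by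
  obtain ⟨hwt, htw⟩ := htype.not_prefix_w_t
  refine isMaximalPrefixCodeIn_of_forall_exists_comparable
    ((isPrefixCode_wordPow_append hwt htw).mono Set.inter_subset_left) Set.inter_subset_right ?_
  intro p hp _
  obtain ⟨k, hk, hcomp⟩ := htype.exists_comparable hUR hp
  exact ⟨_, ⟨⟨k, rfl⟩, hk⟩, hcomp⟩

/-- In the first infinite case, with `Y = w^*t` and `z = ywᵐ ∈ F`, the set
`V = Y ∩ z⁻¹F` is a `z⁻¹F`-maximal prefix code. -/
theorem maximal_prefix_code_infinite_case [Fintype A] (hcard : Fintype.card A = 3)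
    (F : Set (List A)) (hUR : UniformlyRecurrent F) (hT : IsTreeSet F)
    (hAF : ∀ a : A, [a] ∈ F) (x : List A) (hx : x ∈ F) (hbi : Bispecial F x)
    (y : RauzyVertex F x.length) (u v w t : List A)
    (htype : FirstInfiniteType F x.length ⟨x, hx, rfl⟩ y u v w t)
    (m : ℕ) (hz : y.1 ++ wordPow w m ∈ F) :
    IsMaximalPrefixCodeIn {p : List A | (y.1 ++ wordPow w m) ++ p ∈ F}
      ({p : List A | ∃ k : ℕ, p = wordPow w k ++ t} ∩
        {p : List A | (y.1 ++ wordPow w m) ++ p ∈ F}) :=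
  maximal_prefix_code_infinite_case_general F hUR x hx y u v w t htype m
end
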